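/- arXiv:1603.00647 — 6 statements merged into one kernel-verified Lean document; each statement's English description precedes it below -/
import Mathlib

section
/- Let G, X, p, V, t be as given, and let E = V ⋊ G be the semidirect product (the permutation wreath product Z_p ≀ G). If s = (v, g) ∈ E with g of order p having a fixed point on X, then the V-component of s^p is v·(1 + g + ... + g^(p-1)), and this cannot equal c·t for nonzero c ∈ F_p; hence s^p ≠ (c·t, 1) for any nonzero c ∈ F_p. -/
variable {G X : Type*} [Group G] [MulAction G X] (p : ℕ)

/-- The action of `G` on the permutation module `X → ZMod p` (written multiplicatively
so that it can serve as the kernel of a semidirect product). -/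
def permAut : G →* MulAut (Multiplicative (X → ZMod p)) where
  toFun g :=
    { toFun := fun v => Multiplicative.ofAdd (fun x => Multiplicative.toAdd v (g⁻¹ • x))
      invFun := fun v => Multiplicative.ofAdd (fun x => Multiplicative.toAdd v (g • x))
      left_inv := fun v => by
        apply Multiplicative.toAdd.injective
        funext x
        simp
      right_inv := fun v => by
        apply Multiplicative.toAdd.injective
        funext x
        simp
      map_mul' := fun v w => rfl }
  map_one' := by
    apply MulEquiv.ext
    intro v
    apply Multiplicative.toAdd.injective
    funext x
    simp
  map_mul' := fun g h => by
    apply MulEquiv.ext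
    intro v
    apply Multiplicative.toAdd.injective
    funext x
    simp [mul_smul]

/-- The permutation wreath product `ℤ_p ≀ G` for the action of `G` on `X`. -/
abbrev WreathProd (G X : Type*) [Group G] [MulAction G X] (p : ℕ) :=
  SemidirectProduct (Multiplicative (X → ZMod p)) G (permAut p)

/-! The `V`-component of `(v, g)ⁿ` is the norm `∑_{i<n} gⁱ • v`. At a point `x` fixed by `g`
every summand equals `v x`, so the `x`-coordinate of `(v, g)ᵖ` is `p • v x = 0` in `𝔽_p`,
whereas `c • t` has `x`-coordinate `c ≠ 0`. -/

namespace SemidirectProduct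

variable {N H : Type*} [Group N] [Group H] {φ : H →* MulAut N}

theorem right_pow (a : N ⋊[φ] H) (n : ℕ) : (a ^ n).right = a.right ^ n :=
  map_pow rightHom a n

theorem left_pow_succ (a : N ⋊[φ] H) (n : ℕ) :
    (a ^ (n + 1)).left = (a ^ n).left * φ (a.right ^ n) a.left := by
  rw [pow_succ, mul_left, right_pow]

end SemidirectProduct

namespace WreathProd

theorem left_pow (v : Multiplicative (X → ZMod p)) (g : G) (n : ℕ) :
    ((⟨v, g⟩ : WreathProd G X p) ^ n).left =
      Multiplicative.ofAdd
        (fun y : X => ∑ i ∈ Finset.range n, Multiplicative.toAdd v ((g ^ i)⁻¹ • y)) := by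
  induction n with
  | zero => rfl
  | succ n ih =>
    rw [SemidirectProduct.left_pow_succ, ih]
    funext y
    exact (Finset.sum_range_succ _ n).symm

theorem left_pow_apply_of_smul_eq (v : Multiplicative (X → ZMod p)) {g : G} {x : X}
    (hx : g • x = x) (n : ℕ) :
    Multiplicative.toAdd ((⟨v, g⟩ : WreathProd G X p) ^ n).left x =
      n * Multiplicative.toAdd v x := by
  have hfix (i : ℕ) : (g ^ i)⁻¹ • x = x := by
    simpa only [MulAction.mem_fixedBy, zpow_neg, zpow_natCast] using
      MulAction.mem_fixedBy_zpow (α := X) hx (-i)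
  rw [left_pow, toAdd_ofAdd]
  simp only [hfix, Finset.sum_const, Finset.card_range, nsmul_eq_mul]

end WreathProd

theorem stmt_2_general {G X : Type*} [Group G] [MulAction G X]
    (p : ℕ) (v : Multiplicative (X → ZMod p)) (g : G)
    (x : X) (hx : g • x = x) :
    ((⟨v, g⟩ : WreathProd G X p) ^ p).left =
        Multiplicative.ofAdd
          (fun y : X => ∑ i ∈ Finset.range p, Multiplicative.toAdd v ((g ^ i)⁻¹ • y)) ∧
      ∀ c : ZMod p, c ≠ 0 →
        (⟨v, g⟩ : WreathProd G X p) ^ p ≠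
          ⟨Multiplicative.ofAdd (fun _ : X => c), 1⟩ := by
  refine ⟨WreathProd.left_pow p v g p, fun c hc hpow => hc ?_⟩
  have hx_coord := WreathProd.left_pow_apply_of_smul_eq p v hx p
  rw [hpow, ZMod.natCast_self, zero_mul] at hx_coord
  exact hx_coord

/-- In the wreath product `E = V ⋊ G`, if `s = (v, g)` where `g` has
order `p` (a prime) and fixes a point of `X`, then the `V`-component of `s^p` is
`v·(1 + g + ⋯ + g^(p-1))`, and `s^p ≠ (c·t, 1)` for every nonzero `c ∈ 𝔽_p`,
where `t` is the all-ones vector. -/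
theorem stmt_2 {G X : Type*} [Group G] [Finite G] [Fintype X] [MulAction G X]
    (p : ℕ) [Fact p.Prime] (v : Multiplicative (X → ZMod p)) (g : G)
    (hg : orderOf g = p) (x : X) (hx : g • x = x) :
    ((⟨v, g⟩ : WreathProd G X p) ^ p).left =
        Multiplicative.ofAdd
          (fun y : X => ∑ i ∈ Finset.range p, Multiplicative.toAdd v ((g ^ i)⁻¹ • y)) ∧
      ∀ c : ZMod p, c ≠ 0 →
        (⟨v, g⟩ : WreathProd G X p) ^ p ≠
          ⟨Multiplicative.ofAdd (fun _ : X => c), 1⟩ :=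
  stmt_2_general p v g x hx
end

section
/- Let G be a finite group, X a finite G-set, p a prime, V = F_p[X] the permutation module, I ≤ V the trivial submodule spanned by t = Σ_{x∈X} x, and E = V ⋊ G. Suppose S ≤ E satisfies S ∩ V = I and S·V = E (so S is a central extension of Z_p by G inside E). Then there is no s ∈ S whose image g in G has order p, has a fixed point on X, and satisfies |s| = p^2. -/
open scoped Pointwise

variable {G X : Type*} [Group G] [MulAction G X] (p : ℕ)

/-- The diagonal embedding of `ZMod p` into the permutation module. -/
def constHom (X : Type*) (p : ℕ) :
    Multiplicative (ZMod p) →* Multiplicative (X → ZMod p) where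
  toFun c := Multiplicative.ofAdd (fun _ => Multiplicative.toAdd c)
  map_one' := rfl
  map_mul' _ _ := rfl

/-- Lemma 2 of the paper. Let `E = V ⋊ G` be the wreath product,
`I = 𝔽_p · t ≤ V` the trivial submodule spanned by the all-ones vector, and `S ≤ E`
a subgroup with `S ∩ V = I` and `S · V = E`. Then no element `s ∈ S` has order `p²`
while its image `g ∈ G` has order `p` and fixes a point of `X`. -/
theorem stmt_3 {G X : Type*} [Group G] [Finite G] [Fintype X] [MulAction G X]
    (p : ℕ) [Fact p.Prime] (S : Subgroup (WreathProd G X p))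
    (hSV : S ⊓ (SemidirectProduct.inl :
        Multiplicative (X → ZMod p) →* WreathProd G X p).range =
      (SemidirectProduct.inl.comp (constHom X p)).range)
    (hSVE : (S : Set (WreathProd G X p)) *
        ((SemidirectProduct.inl :
          Multiplicative (X → ZMod p) →* WreathProd G X p).range : Set (WreathProd G X p)) =
      Set.univ) :
    ¬ ∃ s ∈ S, orderOf s = p ^ 2 ∧
        orderOf (SemidirectProduct.rightHom s) = p ∧
        ∃ x : X, (SemidirectProduct.rightHom s) • x = x := by
  rintro ⟨s, hsS, hs_ord, hg_ord, x₀, hx₀⟩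
  have hp : p.Prime := Fact.out
  set g : G := SemidirectProduct.rightHom s with hg
  -- powers of g fix x₀
  have hfix : ∀ n : ℕ, (g ^ n) • x₀ = x₀ := by
    intro n
    induction n with
    | zero => simp
    | succ n ih => rw [pow_succ, mul_smul, hx₀, ih]
  have hfixinv : ∀ n : ℕ, (g ^ n)⁻¹ • x₀ = x₀ := fun n =>
    inv_smul_eq_iff.mpr (hfix n).symm
  have hright : ∀ n : ℕ, (s ^ n).right = g ^ n := by
    intro n
    have := map_pow SemidirectProduct.rightHom s n
    simpa [SemidirectProduct.rightHom, hg] using this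
  -- key computation: the x₀-coordinate of (s^n).left
  have key : ∀ n : ℕ, Multiplicative.toAdd (s ^ n).left x₀ =
      (n : ZMod p) * Multiplicative.toAdd s.left x₀ := by
    intro n
    induction n with
    | zero => simp
    | succ n ih =>
      have h1 : (s ^ (n + 1)).left =
          (s ^ n).left * (permAut p (s ^ n).right) s.left := by
        rw [pow_succ]; rfl
      have h2 : Multiplicative.toAdd ((permAut p (s ^ n).right) s.left) x₀ =
          Multiplicative.toAdd s.left x₀ := by
        rw [hright n]
        show Multiplicative.toAdd s.left ((g ^ n)⁻¹ • x₀) = _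
        rw [hfixinv n]
      have h3 : Multiplicative.toAdd (s ^ (n + 1)).left x₀ =
          Multiplicative.toAdd (s ^ n).left x₀ +
            Multiplicative.toAdd ((permAut p (s ^ n).right) s.left) x₀ := by
        rw [h1]; rfl
      rw [h3, ih, h2]
      push_cast
      ring
  -- s^p lies in S ⊓ V, hence in the diagonal
  have hmem : s ^ p ∈ S ⊓ (SemidirectProduct.inl :
      Multiplicative (X → ZMod p) →* WreathProd G X p).range := by
    refine ⟨pow_mem hsS p, ?_⟩
    rw [SemidirectProduct.range_inl_eq_ker_rightHom]
    show SemidirectProduct.rightHom (s ^ p) = 1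
    rw [map_pow, ← hg, ← hg_ord, pow_orderOf_eq_one]
  rw [hSV] at hmem
  obtain ⟨c, hc⟩ := hmem
  have hleft : (s ^ p).left = constHom X p c := by
    rw [← hc]; rfl
  have hcval : Multiplicative.toAdd c = 0 := by
    have := key p
    rw [hleft] at this
    have h0 : Multiplicative.toAdd (constHom X p c) x₀ = Multiplicative.toAdd c := rfl
    rw [h0] at this
    rw [this, ZMod.natCast_self, zero_mul]
  have hc1 : c = 1 := by
    have : Multiplicative.toAdd c = Multiplicative.toAdd (1 : Multiplicative (ZMod p)) := by
      simpa using hcval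
    exact Multiplicative.toAdd.injective this
  have hsp : s ^ p = 1 := by rw [← hc, hc1, map_one]
  have hdvd : orderOf s ∣ p := orderOf_dvd_of_pow_eq_one hsp
  rw [hs_ord] at hdvd
  have hle : p ^ 2 ≤ p := Nat.le_of_dvd hp.pos hdvd
  have hlt : p < p ^ 2 := by nlinarith [hp.two_le]
  omega
end

section
/- Let 0 → L → M be an injective morphism of G-modules, and let E be an extension 1 → M → E → G → 1 defined by a class γ ∈ H²(G, M). Then E contains a subgroup S with S ∩ M = L and S·M = E if and only if γ lies in the image of the induced map φ: H²(G, L) → H²(G, M). -/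
/-!
A subgroup `S` with `S ∩ M = L` and `S · M = E` is the same thing as a lift `τ : G → E` of `π`
whose factor set `τ g * τ h * τ (g * h)⁻¹` takes values in `L`: given `S`, lift every `g` into
`S`; given `τ`, the map `τ` becomes a homomorphism into `E ⧸ L`, and `S` is the preimage of its
image. Two lifts differ by a cochain `c : G → M`, which changes the factor set by the coboundary
of `c`; hence a lift with factor set `f ∘ β` exists iff `f ∘ β` is cohomologous to `γ`. Since
`f` is injective and equivariant, `β` is a cocycle because `f ∘ β` is one.
-/

open scoped Pointwise

/-- A `2`-cocycle of the group `G` with values in the `G`-module `M`. -/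
def IsTwoCocycle {G M : Type*} [Group G] [AddCommGroup M] [DistribMulAction G M]
    (γ : G → G → M) : Prop :=
  ∀ g h k : G, g • γ h k + γ g (h * k) = γ (g * h) k + γ g h

/-- Two `2`-cocycles are cohomologous if they differ by a coboundary. -/
def Cohomologous {G M : Type*} [Group G] [AddCommGroup M] [DistribMulAction G M]
    (γ₁ γ₂ : G → G → M) : Prop :=
  ∃ c : G → M, ∀ g h : G, γ₁ g h - γ₂ g h = g • c h - c (g * h) + c g

section SupplementOfKernel

variable {G E : Type*} [Group G] [Group E] {π : E →* G}

theorem exists_section_of_supplement (hπ : Function.Surjective π) {N S : Subgroup E}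
    (hSN : S ⊓ π.ker = N) (hSK : (S : Set E) * (π.ker : Set E) = Set.univ) :
    ∃ τ : G → E, (∀ g, π (τ g) = g) ∧ ∀ g h, τ g * τ h * (τ (g * h))⁻¹ ∈ N := by
  have hlift : ∀ g, ∃ s ∈ S, π s = g := fun g => by
    obtain ⟨e, rfl⟩ := hπ g
    obtain ⟨s, hs, k, hk, rfl⟩ := Set.mem_mul.mp (hSK.symm ▸ Set.mem_univ e)
    exact ⟨s, hs, by rw [map_mul, MonoidHom.mem_ker.mp hk, mul_one]⟩
  choose τ hτS hτ using hlift
  refine ⟨τ, hτ, fun g h => hSN ▸ Subgroup.mem_inf.mpr ⟨?_, ?_⟩⟩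
  · exact mul_mem (mul_mem (hτS g) (hτS h)) (inv_mem (hτS (g * h)))
  · simp [hτ]

theorem exists_supplement_of_section {N : Subgroup E} [N.Normal] (hN : N ≤ π.ker)
    (τ : G → E) (hτ : ∀ g, π (τ g) = g) (hτN : ∀ g h, τ g * τ h * (τ (g * h))⁻¹ ∈ N) :
    ∃ S : Subgroup E, S ⊓ π.ker = N ∧ (S : Set E) * (π.ker : Set E) = Set.univ := by
  let s : G →* E ⧸ N := MonoidHom.mk' (fun g => (τ g : E ⧸ N)) fun g h =>
    (QuotientGroup.eq_iff_div_mem.mpr (by simpa [div_eq_mul_inv] using hτN g h)).symm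
  have hτ1 : τ 1 ∈ N := by simpa using hτN 1 1
  refine ⟨s.range.comap (QuotientGroup.mk' N), ?_, ?_⟩
  · ext e
    simp only [Subgroup.mem_inf, Subgroup.mem_comap, MonoidHom.mem_range, MonoidHom.mem_ker]
    constructor
    · rintro ⟨⟨g, hg⟩, he⟩
      have hτe : (τ g)⁻¹ * e ∈ N := QuotientGroup.eq.mp hg
      have hg1 : g = 1 := by simpa [he, hτ] using hN hτe
      subst hg1
      simpa using mul_mem hτ1 hτe
    · intro he
      refine ⟨⟨1, ?_⟩, hN he⟩
      exact ((QuotientGroup.eq_one_iff _).mpr hτ1).trans ((QuotientGroup.eq_one_iff _).mpr he).symm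
  · refine Set.eq_univ_of_forall fun e =>
      Set.mem_mul.mpr ⟨τ (π e), ⟨π e, rfl⟩, (τ (π e))⁻¹ * e, ?_, by group⟩
    simp [MonoidHom.mem_ker, hτ]

theorem exists_supplement_iff_exists_section (hπ : Function.Surjective π) {N : Subgroup E}
    [N.Normal] (hN : N ≤ π.ker) :
    (∃ S : Subgroup E, S ⊓ π.ker = N ∧ (S : Set E) * (π.ker : Set E) = Set.univ) ↔
      ∃ τ : G → E, (∀ g, π (τ g) = g) ∧ ∀ g h, τ g * τ h * (τ (g * h))⁻¹ ∈ N :=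
  ⟨fun ⟨_, hSN, hSK⟩ => exists_section_of_supplement hπ hSN hSK,
    fun ⟨τ, hτ, hτN⟩ => exists_supplement_of_section hN τ hτ hτN⟩

end SupplementOfKernel

theorem IsTwoCocycle.of_comp {G L M : Type*} [Group G] [AddCommGroup L] [AddCommGroup M]
    [DistribMulAction G L] [DistribMulAction G M] {f : L →+ M} (hf : Function.Injective f)
    (hfG : ∀ (g : G) (l : L), f (g • l) = g • f l) {β : G → G → L}
    (hβ : IsTwoCocycle fun g h => f (β g h)) : IsTwoCocycle β :=
  fun g h k => hf (by simpa [hfG] using hβ g h k)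

def IsFactorSet {G M E : Type*} [Group G] [AddCommGroup M] [Group E]
    (ι : Multiplicative M →* E) (τ : G → E) (α : G → G → M) : Prop :=
  ∀ g h, τ g * τ h = ι (.ofAdd (α g h)) * τ (g * h)

section FactorSet

variable {G M E : Type*} [Group G] [AddCommGroup M] [Group E]
  {ι : Multiplicative M →* E} {π : E →* G}

theorem mul_ofAdd_eq_ofAdd_smul_mul [DistribMulAction G M]
    (hconj : ∀ (e : E) (m : Multiplicative M),
      e * ι m * e⁻¹ = ι (Multiplicative.ofAdd (π e • Multiplicative.toAdd m)))
    (e : E) (m : M) : e * ι (.ofAdd m) = ι (.ofAdd (π e • m)) * e := by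
  rw [← toAdd_ofAdd m, ← hconj e, toAdd_ofAdd]
  group

theorem IsFactorSet.unique (hι : Function.Injective ι) {τ : G → E} {α α' : G → G → M}
    (hα : IsFactorSet ι τ α) (hα' : IsFactorSet ι τ α') : α = α' :=
  funext₂ fun g h => Multiplicative.ofAdd.injective <| hι <| mul_right_cancel <|
    (hα g h).symm.trans (hα' g h)

theorem IsFactorSet.isTwoCocycle [DistribMulAction G M] (hι : Function.Injective ι)
    (hconj : ∀ (e : E) (m : Multiplicative M),
      e * ι m * e⁻¹ = ι (Multiplicative.ofAdd (π e • Multiplicative.toAdd m)))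
    {τ : G → E} (hτ : ∀ g, π (τ g) = g) {α : G → G → M} (hα : IsFactorSet ι τ α) :
    IsTwoCocycle α := by
  intro g h k
  have hleft : τ g * τ h * τ k = ι (.ofAdd (α (g * h) k + α g h)) * τ (g * h * k) := by
    rw [hα g h, mul_assoc, hα (g * h) k, ← mul_assoc, ← map_mul, ← ofAdd_add, add_comm]
  have hright : τ g * (τ h * τ k) = ι (.ofAdd (g • α h k + α g (h * k))) * τ (g * (h * k)) := by
    rw [hα h k, ← mul_assoc, mul_ofAdd_eq_ofAdd_smul_mul hconj, hτ, mul_assoc, hα g (h * k),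
      ← mul_assoc, ← map_mul, ← ofAdd_add]
  rw [← mul_assoc, hleft, mul_assoc g] at hright
  exact Multiplicative.ofAdd.injective (hι (mul_right_cancel hright)).symm

theorem IsFactorSet.ofAdd_mul [DistribMulAction G M]
    (hconj : ∀ (e : E) (m : Multiplicative M),
      e * ι m * e⁻¹ = ι (Multiplicative.ofAdd (π e • Multiplicative.toAdd m)))
    {τ : G → E} (hτ : ∀ g, π (τ g) = g) {α : G → G → M} (hα : IsFactorSet ι τ α) (c : G → M) :
    IsFactorSet ι (fun g => ι (.ofAdd (c g)) * τ g)
      (fun g h => α g h + (g • c h - c (g * h) + c g)) := by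
  intro g h
  calc ι (.ofAdd (c g)) * τ g * (ι (.ofAdd (c h)) * τ h)
      = ι (.ofAdd (c g)) * (τ g * ι (.ofAdd (c h))) * τ h := by simp only [mul_assoc]
    _ = ι (.ofAdd (c g)) * ι (.ofAdd (g • c h)) * (τ g * τ h) := by
      rw [mul_ofAdd_eq_ofAdd_smul_mul hconj, hτ]; simp only [mul_assoc]
    _ = ι (.ofAdd (c g + g • c h + α g h)) * τ (g * h) := by
      rw [hα, ofAdd_add, ofAdd_add, map_mul, map_mul]; simp only [mul_assoc]
    _ = ι (.ofAdd (α g h + (g • c h - c (g * h) + c g))) *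
          (ι (.ofAdd (c (g * h))) * τ (g * h)) := by
      rw [← mul_assoc, ← map_mul, ← ofAdd_add]
      congr 3
      abel

theorem exists_isFactorSet_iff_cohomologous [DistribMulAction G M] (hι : Function.Injective ι)
    (hexact : ι.range = π.ker)
    (hconj : ∀ (e : E) (m : Multiplicative M),
      e * ι m * e⁻¹ = ι (Multiplicative.ofAdd (π e • Multiplicative.toAdd m)))
    {σ : G → E} (hσ : ∀ g, π (σ g) = g) {γ : G → G → M} (hγ : IsFactorSet ι σ γ)
    (α : G → G → M) :
    (∃ τ : G → E, (∀ g, π (τ g) = g) ∧ IsFactorSet ι τ α) ↔ Cohomologous α γ := by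
  have hιπ : ∀ m : M, π (ι (.ofAdd m)) = 1 := fun m =>
    MonoidHom.mem_ker.mp (hexact ▸ ⟨.ofAdd m, rfl⟩)
  constructor
  · rintro ⟨τ, hτ, hα⟩
    have hdiff : ∀ g, ∃ m : M, ι (.ofAdd m) = τ g * (σ g)⁻¹ := fun g => by
      obtain ⟨m, hm⟩ : τ g * (σ g)⁻¹ ∈ ι.range := by simp [hexact, MonoidHom.mem_ker, hτ, hσ]
      exact ⟨m.toAdd, hm⟩
    choose c hc using hdiff
    have hτc : (fun g => ι (.ofAdd (c g)) * σ g) = τ := funext fun g => by rw [hc]; group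
    obtain rfl := (hτc ▸ hγ.ofAdd_mul hconj hσ c).unique hι hα
    exact ⟨c, fun g h => add_sub_cancel_left _ _⟩
  · rintro ⟨c, hc⟩
    refine ⟨fun g => ι (.ofAdd (c g)) * σ g, fun g => by rw [map_mul, hιπ, hσ, one_mul], ?_⟩
    convert hγ.ofAdd_mul hconj hσ c using 1
    exact funext₂ fun g h => eq_add_of_sub_eq' (hc g h)

end FactorSet

theorem normal_range_comp_toMultiplicative {G L M E : Type*} [Group G] [AddCommGroup L]
    [AddCommGroup M] [DistribMulAction G L] [DistribMulAction G M] [Group E]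
    {ι : Multiplicative M →* E} {π : E →* G} {f : L →+ M}
    (hfG : ∀ (g : G) (l : L), f (g • l) = g • f l)
    (hconj : ∀ (e : E) (m : Multiplicative M),
      e * ι m * e⁻¹ = ι (Multiplicative.ofAdd (π e • Multiplicative.toAdd m))) :
    (ι.comp (AddMonoidHom.toMultiplicative f)).range.Normal where
  conj_mem := by
    rintro _ ⟨l, rfl⟩ e
    exact ⟨.ofAdd (π e • l.toAdd), by simp [hconj, hfG]⟩

theorem forall_mul_mul_inv_mem_range_iff {G L M E : Type*} [Group G] [AddCommGroup L]
    [AddCommGroup M] [Group E] (ι : Multiplicative M →* E) (f : L →+ M) (τ : G → E) :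
    (∀ g h, τ g * τ h * (τ (g * h))⁻¹ ∈ (ι.comp (AddMonoidHom.toMultiplicative f)).range) ↔
      ∃ β : G → G → L, IsFactorSet ι τ fun g h => f (β g h) := by
  simp only [MonoidHom.mem_range, eq_mul_inv_iff_mul_eq]
  constructor
  · intro h
    choose β hβ using h
    exact ⟨fun g h => (β g h).toAdd, fun g h => (hβ g h).symm⟩
  · rintro ⟨β, hβ⟩ g h
    exact ⟨.ofAdd (β g h), (hβ g h).symm⟩

/-- Lemma 2 of [zse]. Let `f : L → M` be an injective morphism of
`G`-modules, and let `E` be an extension `1 → M → E → G → 1` whose class in `H²(G,M)`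
is represented by the `2`-cocycle `γ` (via the section `σ`). Then `E` contains a
subgroup `S` with `S ∩ M = L` and `S · M = E` if and only if the class `γ` lies in the
image of the induced map `φ : H²(G,L) → H²(G,M)`, i.e. iff there is a `2`-cocycle `β`
with values in `L` such that `f ∘ β` is cohomologous to `γ`. -/
theorem stmt_4 {G L M E : Type*} [Group G] [AddCommGroup L] [AddCommGroup M]
    [DistribMulAction G L] [DistribMulAction G M] [Group E]
    (f : L →+ M) (hf : Function.Injective f) (hfG : ∀ (g : G) (l : L), f (g • l) = g • f l)
    (ι : Multiplicative M →* E) (hι : Function.Injective ι)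
    (π : E →* G) (hπ : Function.Surjective π)
    (hexact : ι.range = π.ker)
    (hconj : ∀ (e : E) (m : Multiplicative M),
      e * ι m * e⁻¹ = ι (Multiplicative.ofAdd (π e • Multiplicative.toAdd m)))
    (γ : G → G → M) (σ : G → E) (hσ : ∀ g, π (σ g) = g)
    (hγ : ∀ g h : G, σ g * σ h * (σ (g * h))⁻¹ = ι (Multiplicative.ofAdd (γ g h))) :
    (∃ S : Subgroup E,
        S ⊓ ι.range = (ι.comp (AddMonoidHom.toMultiplicative f)).range ∧
        (S : Set E) * (ι.range : Set E) = Set.univ) ↔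
      ∃ β : G → G → L, IsTwoCocycle β ∧ Cohomologous (fun g h => f (β g h)) γ := by
  have := normal_range_comp_toMultiplicative hfG hconj
  have hN : (ι.comp (AddMonoidHom.toMultiplicative f)).range ≤ π.ker := by
    rintro _ ⟨l, rfl⟩
    exact hexact ▸ ⟨_, rfl⟩
  have hσγ : IsFactorSet ι σ γ := fun g h => by rw [← hγ]; group
  have hcoh := exists_isFactorSet_iff_cohomologous hι hexact hconj hσ hσγ
  rw [hexact, exists_supplement_iff_exists_section hπ hN]
  constructor
  · rintro ⟨τ, hτ, hτN⟩
    obtain ⟨β, hβ⟩ := (forall_mul_mul_inv_mem_range_iff ι f τ).mp hτN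
    exact ⟨β, (hβ.isTwoCocycle hι hconj hτ).of_comp hf hfG, (hcoh _).mp ⟨τ, hτ, hβ⟩⟩
  · rintro ⟨β, -, hβ⟩
    obtain ⟨τ, hτ, hτβ⟩ := (hcoh _).mpr hβ
    exact ⟨τ, hτ, (forall_mul_mul_inv_mem_range_iff ι f τ).mpr ⟨β, hτβ⟩⟩
end

section
/- Let G be a group, L ≤ M an inclusion of G-modules, and E a split extension M ⋊ G (class 0 in H²(G,M)). Then the set of cohomology classes in H²(G,L) defining subextensions S of E with S ∩ M = L and S·M = E equals the kernel of the induced map φ: H²(G,L) → H²(G,M). In particular, a nonsplit extension L.G embeds as such a subextension if and only if ker φ ≠ 0 contains the class of L.G. -/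
/-!
Both directions rest on one computation in `M ⋊ G`: for a set-theoretic section
`σ g = (a g, g)` of `M ⋊ G → G`, the defect `σ g * σ h * σ (g * h)⁻¹` is the element
`g • a h - a (g * h) + a g` of `M`, i.e. the coboundary of `a`. So a section of `E` with
defect `β` exhibits `β` as a coboundary in `M`. Conversely, if `β = δc`, the sections
`g ↦ (c g, g)` together with `L` generate the subextension
`S = {(m, g) | m - c g ∈ L}`; it is a subgroup because `L` is `G`-stable and `δc` takes
values in `L`.
-/

open scoped Pointwise

/-- A `2`-coboundary of the group `G` with values in the `G`-module `M`. -/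
def IsTwoCoboundary {G M : Type*} [Group G] [AddCommGroup M] [DistribMulAction G M]
    (γ : G → G → M) : Prop :=
  ∃ c : G → M, ∀ g h : G, γ g h = g • c h - c (g * h) + c g

/-- The action of `G` on a `G`-module `M`, written multiplicatively. -/
def modAut (G M : Type*) [Group G] [AddCommGroup M] [DistribMulAction G M] :
    G →* MulAut (Multiplicative M) where
  toFun g :=
    { toFun := fun v => Multiplicative.ofAdd (g • Multiplicative.toAdd v)
      invFun := fun v => Multiplicative.ofAdd (g⁻¹ • Multiplicative.toAdd v)
      left_inv := fun v => by
        apply Multiplicative.toAdd.injective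
        simp
      right_inv := fun v => by
        apply Multiplicative.toAdd.injective
        simp
      map_mul' := fun v w => by
        apply Multiplicative.toAdd.injective
        simp [smul_add] }
  map_one' := by
    apply MulEquiv.ext
    intro v
    apply Multiplicative.toAdd.injective
    simp
  map_mul' := fun g h => by
    apply MulEquiv.ext
    intro v
    apply Multiplicative.toAdd.injective
    simp [mul_smul]

namespace SemidirectProduct

variable {N G : Type*} [Group N] [Group G] {φ : G →* MulAut N}

theorem coe_mul_range_inl_eq_univ {S : Set (N ⋊[φ] G)}
    (hS : ∀ g : G, ∃ s ∈ S, s.right = g) :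
    S * ((inl : N →* N ⋊[φ] G).range : Set (N ⋊[φ] G)) = Set.univ := by
  refine Set.eq_univ_of_forall fun x => ?_
  obtain ⟨s, hsS, hs⟩ := hS x.right
  have hker : s⁻¹ * x ∈ (inl : N →* N ⋊[φ] G).range := by
    rw [range_inl_eq_ker_rightHom, MonoidHom.mem_ker]
    simp [hs]
  exact ⟨s, hsS, s⁻¹ * x, hker, mul_inv_cancel_left s x⟩

end SemidirectProduct

section ModuleExtension

open SemidirectProduct Multiplicative

variable {G M : Type*} [Group G] [AddCommGroup M] [DistribMulAction G M]

@[simp]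
theorem modAut_toAdd (g : G) (v : Multiplicative M) :
    toAdd (modAut G M g v) = g • toAdd v := rfl

theorem mul_mul_inv_eq_inl_coboundary (σ : G → Multiplicative M ⋊[modAut G M] G)
    (hσ : ∀ g, (σ g).right = g) (g h : G) :
    σ g * σ h * (σ (g * h))⁻¹ = inl (ofAdd
      (g • toAdd (σ h).left - toAdd (σ (g * h)).left + toAdd (σ g).left)) := by
  ext
  · simp only [mul_left, inv_left, mul_right, hσ, left_inl, modAut_toAdd, toAdd_mul,
      toAdd_inv, toAdd_ofAdd, smul_neg, smul_smul, mul_inv_cancel, one_smul]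
    abel
  · simp only [mul_right, inv_right, hσ, right_inl, mul_inv_cancel]

theorem isTwoCoboundary_of_mul_mul_inv_eq_inl (γ : G → G → M)
    (σ : G → Multiplicative M ⋊[modAut G M] G) (hσ : ∀ g, (σ g).right = g)
    (hγ : ∀ g h, σ g * σ h * (σ (g * h))⁻¹ = inl (ofAdd (γ g h))) :
    IsTwoCoboundary γ := by
  refine ⟨fun g => toAdd (σ g).left, fun g h => ?_⟩
  have := hγ g h
  rwa [mul_mul_inv_eq_inl_coboundary σ hσ, inl_inj, ofAdd.injective.eq_iff, eq_comm] at this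

theorem apply_one_mem_of_coboundary_mem (L : AddSubgroup M) {c : G → M}
    (hc : ∀ g h : G, g • c h - c (g * h) + c g ∈ L) : c 1 ∈ L := by
  simpa using hc 1 1

section Subextension

variable (L : AddSubgroup M) (hL : ∀ (g : G), ∀ m ∈ L, g • m ∈ L) {c : G → M}
  (hc : ∀ g h : G, g • c h - c (g * h) + c g ∈ L)

def subextension : Subgroup (Multiplicative M ⋊[modAut G M] G) where
  carrier := {x | toAdd x.left - c x.right ∈ L}
  one_mem' := by
    simpa using neg_mem (apply_one_mem_of_coboundary_mem L hc)
  mul_mem' {x y} hx hy := by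
    have key : toAdd (x * y).left - c (x * y).right = (toAdd x.left - c x.right) +
        x.right • (toAdd y.left - c y.right) +
        (x.right • c y.right - c (x.right * y.right) + c x.right) := by
      simp only [mul_left, mul_right, toAdd_mul, modAut_toAdd, smul_sub]
      abel
    rw [Set.mem_ofPred_eq, key]
    exact add_mem (add_mem hx (hL _ _ hy)) (hc _ _)
  inv_mem' {x} hx := by
    have key : toAdd x⁻¹.left - c x⁻¹.right = -(x.right⁻¹ • (toAdd x.left - c x.right)) -
        (x.right⁻¹ • c x.right - c (x.right⁻¹ * x.right) + c x.right⁻¹) - c 1 := by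
      simp only [inv_left, inv_right, modAut_toAdd, toAdd_inv, smul_sub, smul_neg,
        inv_mul_cancel]
      abel
    rw [Set.mem_ofPred_eq, key]
    exact sub_mem (sub_mem (neg_mem (hL _ _ hx)) (hc _ _))
      (apply_one_mem_of_coboundary_mem L hc)

theorem mem_subextension {x : Multiplicative M ⋊[modAut G M] G} :
    x ∈ subextension L hL hc ↔ toAdd x.left - c x.right ∈ L :=
  Iff.rfl

theorem subextension_inf_range_inl :
    subextension L hL hc ⊓
        (inl : Multiplicative M →* Multiplicative M ⋊[modAut G M] G).range =
      Subgroup.map inl (AddSubgroup.toSubgroup L) := by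
  have hc1 := apply_one_mem_of_coboundary_mem L hc
  ext x
  simp only [Subgroup.mem_inf, mem_subextension, MonoidHom.mem_range, Subgroup.mem_map,
    Multiplicative.mem_toSubgroup]
  constructor
  · rintro ⟨hx, m, rfl⟩
    refine ⟨m, ?_, rfl⟩
    simpa using add_mem hx hc1
  · rintro ⟨m, hm, rfl⟩
    exact ⟨by simpa using sub_mem hm hc1, m, rfl⟩

end Subextension

end ModuleExtension

theorem stmt_5_general {G M : Type*} [Group G] [AddCommGroup M] [DistribMulAction G M]
    (L : AddSubgroup M) (hL : ∀ (g : G), ∀ m ∈ L, g • m ∈ L)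
    (β : G → G → L) :
    (∃ S : Subgroup (SemidirectProduct (Multiplicative M) G (modAut G M)),
        S ⊓ (SemidirectProduct.inl :
            Multiplicative M →* SemidirectProduct (Multiplicative M) G (modAut G M)).range =
          Subgroup.map SemidirectProduct.inl (AddSubgroup.toSubgroup L) ∧
        (S : Set (SemidirectProduct (Multiplicative M) G (modAut G M))) *
            ((SemidirectProduct.inl :
              Multiplicative M →* SemidirectProduct (Multiplicative M) G (modAut G M)).range :
              Set (SemidirectProduct (Multiplicative M) G (modAut G M))) = Set.univ ∧
        ∃ σ : G → SemidirectProduct (Multiplicative M) G (modAut G M),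
          (∀ g, σ g ∈ S) ∧ (∀ g, SemidirectProduct.rightHom (σ g) = g) ∧
          ∀ g h : G, σ g * σ h * (σ (g * h))⁻¹ =
            SemidirectProduct.inl (Multiplicative.ofAdd (β g h : M))) ↔
      IsTwoCoboundary (fun g h => (β g h : M)) := by
  constructor
  · rintro ⟨-, -, -, σ, -, hσ, hβσ⟩
    exact isTwoCoboundary_of_mul_mul_inv_eq_inl _ σ hσ hβσ
  · rintro ⟨c, hc⟩
    have hcL : ∀ g h, g • c h - c (g * h) + c g ∈ L := fun g h => hc g h ▸ (β g h).2
    let σ (g : G) : Multiplicative M ⋊[modAut G M] G := ⟨Multiplicative.ofAdd (c g), g⟩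
    have hσS : ∀ g, σ g ∈ subextension L hL hcL := fun g => by simp [mem_subextension, σ]
    refine ⟨subextension L hL hcL, subextension_inf_range_inl L hL hcL,
      SemidirectProduct.coe_mul_range_inl_eq_univ fun g => ⟨σ g, hσS g, rfl⟩,
      σ, hσS, fun _ => rfl, fun g h => ?_⟩
    rw [mul_mul_inv_eq_inl_coboundary σ fun _ => rfl]
    exact congrArg (SemidirectProduct.inl ∘ Multiplicative.ofAdd) (hc g h).symm

/-- Let `L ≤ M` be an inclusion of `G`-modules and
`E = M ⋊ G` the split extension (class `0 ∈ H²(G,M)`). A `2`-cocycle `β` with values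
in `L` defines a subextension `S` of `E` (i.e. a subgroup with `S ∩ M = L` and
`S · M = E`, together with a section `σ : G → S` realizing `β`) if and only if the
image of `β` in `H²(G,M)` vanishes, i.e. `β` (viewed in `M`) is a coboundary. -/
theorem stmt_5 {G M : Type*} [Group G] [AddCommGroup M] [DistribMulAction G M]
    (L : AddSubgroup M) (hL : ∀ (g : G), ∀ m ∈ L, g • m ∈ L)
    (β : G → G → L) (hβ : IsTwoCocycle (fun g h => (β g h : M))) :
    (∃ S : Subgroup (SemidirectProduct (Multiplicative M) G (modAut G M)),
        S ⊓ (SemidirectProduct.inl :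
            Multiplicative M →* SemidirectProduct (Multiplicative M) G (modAut G M)).range =
          Subgroup.map SemidirectProduct.inl (AddSubgroup.toSubgroup L) ∧
        (S : Set (SemidirectProduct (Multiplicative M) G (modAut G M))) *
            ((SemidirectProduct.inl :
              Multiplicative M →* SemidirectProduct (Multiplicative M) G (modAut G M)).range :
              Set (SemidirectProduct (Multiplicative M) G (modAut G M))) = Set.univ ∧
        ∃ σ : G → SemidirectProduct (Multiplicative M) G (modAut G M),
          (∀ g, σ g ∈ S) ∧ (∀ g, SemidirectProduct.rightHom (σ g) = g) ∧
          ∀ g h : G, σ g * σ h * (σ (g * h))⁻¹ =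
            SemidirectProduct.inl (Multiplicative.ofAdd (β g h : M))) ↔
      IsTwoCoboundary (fun g h => (β g h : M)) :=
  stmt_5_general L hL β
end

section
/- Let q be a prime power, n ≥ 2, r a prime dividing gcd(n, q-1) with r ∣ (q-1)/gcd(n,q-1), and let a ∈ F_q^× have order r·gcd(n,q-1). Then the diagonal matrix d = diag(a, a, ..., a, a^(1-n)) ∈ SL_n(q) has an image in PSL_n(q) of order divisible by r, and in fact the image of d in any quotient of SL_n(q) by a central subgroup of index r over the center's image — specifically, the image s of d in the quotient S = SL_n(q)/Z₀ where Z₀ is the subgroup of scalar matrices of index r in the full scalar subgroup — has order r², while the image g of s in PSL_n(q) has order r. -/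
open Matrix

/-!
The `r`-th power of `d = diag(a, …, a, a^{1-n})` is the scalar matrix `a^r`, and `a^r` is a
primitive `gcd(n, q - 1)`-th root of unity, so `d^r` generates the centre `Z` of `SL_n(q)`,
while `d` itself is not scalar because `a^n ≠ 1`. Hence the image of `d` in `SL_n(q)/Z` has
order `r`. A subgroup `Z₀` of index `r` in the cyclic group `Z = ⟨d^r⟩` contains `(d^r)^r` but
not `d^r`, so the image of `d` in `SL_n(q)/Z₀` has order `r^2`.
-/

theorem QuotientGroup.orderOf_mk_eq_prime {G : Type*} [Group G] {H : Subgroup G} [H.Normal]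
    {g : G} {p : ℕ} [Fact p.Prime] (hnot : g ∉ H) (hmem : g ^ p ∈ H) : orderOf (g : G ⧸ H) = p :=
  orderOf_eq_prime (by rwa [← QuotientGroup.mk_pow, QuotientGroup.eq_one_iff])
    (by rwa [Ne, QuotientGroup.eq_one_iff])

theorem QuotientGroup.orderOf_mk_eq_prime_pow {G : Type*} [Group G] {H : Subgroup G} [H.Normal]
    {g : G} {p m : ℕ} [Fact p.Prime] (hnot : g ^ p ^ m ∉ H) (hmem : g ^ p ^ (m + 1) ∈ H) :
    orderOf (g : G ⧸ H) = p ^ (m + 1) :=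
  orderOf_eq_prime_pow (by rwa [← QuotientGroup.mk_pow, QuotientGroup.eq_one_iff])
    (by rwa [← QuotientGroup.mk_pow, QuotientGroup.eq_one_iff])

theorem Subgroup.notMem_of_le_zpowers_of_relIndex_ne_one {G : Type*} [Group G]
    {H K : Subgroup G} {z : G} (hK : K ≤ zpowers z) (hHK : H.relIndex K ≠ 1) : z ∉ H :=
  fun hz => hHK (relIndex_eq_one.mpr (hK.trans (zpowers_le.mpr hz)))

section InvPowPred

variable {G : Type*} [Group G] {a : G} {n : ℕ}

theorem eq_inv_pow_pred_iff (hn : 1 ≤ n) : a = a⁻¹ ^ (n - 1) ↔ a ^ n = 1 := by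
  rw [inv_pow, eq_inv_iff_mul_eq_one, ← pow_succ', Nat.sub_add_cancel hn]

theorem inv_pow_pred_pow_eq_pow {m : ℕ} (hn : 1 ≤ n) (ha : a ^ (n * m) = 1) :
    (a⁻¹ ^ (n - 1)) ^ m = a ^ m := by
  rw [inv_pow, inv_pow, ← pow_mul, inv_eq_iff_mul_eq_one, ← pow_add, ← add_one_mul,
    Nat.sub_add_cancel hn, ha]

end InvPowPred

namespace Matrix.SpecialLinearGroup

section Diagonal

variable {n : Type*} [Fintype n] [DecidableEq n] {R : Type*} [CommRing R]
  {A : SpecialLinearGroup n R} {v : n → R}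

theorem notMem_center_of_coe_eq_diagonal (hA : (A : Matrix n n R) = diagonal v) {i j : n}
    (hij : v i ≠ v j) : A ∉ Subgroup.center (SpecialLinearGroup n R) := by
  intro h
  obtain ⟨c, -, hc⟩ := mem_center_iff.mp h
  rw [hA, scalar_apply, diagonal_eq_diagonal_iff] at hc
  exact hij ((hc i).symm.trans (hc j))

theorem coe_pow_eq_scalar_of_coe_eq_diagonal (hA : (A : Matrix n n R) = diagonal v) {m : ℕ}
    {c : R} (hv : ∀ i, v i ^ m = c) :
    ((A ^ m : SpecialLinearGroup n R) : Matrix n n R) = scalar n c := by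
  rw [coe_pow, hA, diagonal_pow, scalar_apply]
  exact congrArg diagonal (funext hv)

end Diagonal

/-- Over a finite field the central scalars are the `gcd(|n|, q - 1)`-th roots of unity. -/
theorem center_eq_zpowers_of_isPrimitiveRoot {n : Type*} [Fintype n] [DecidableEq n] [Nonempty n]
    {F : Type*} [Field F] [Fintype F] {z : SpecialLinearGroup n F} {c : F}
    (hz : (z : Matrix n n F) = scalar n c)
    (hc : IsPrimitiveRoot c (Nat.gcd (Fintype.card n) (Fintype.card F - 1))) :
    Subgroup.center (SpecialLinearGroup n F) = Subgroup.zpowers z := by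
  have : NeZero (Nat.gcd (Fintype.card n) (Fintype.card F - 1)) :=
    ⟨(Nat.gcd_pos_of_pos_left _ Fintype.card_pos).ne'⟩
  refine le_antisymm (fun w hw => ?_) (Subgroup.zpowers_le.mpr ?_)
  · obtain ⟨c', hc'n, hw⟩ := mem_center_iff.mp hw
    have hc'0 : c' ≠ 0 := by
      rintro rfl
      exact zero_ne_one ((zero_pow Fintype.card_ne_zero).symm.trans hc'n)
    obtain ⟨i, -, rfl⟩ := hc.eq_pow_of_pow_eq_one
      (pow_gcd_eq_one.mpr ⟨hc'n, FiniteField.pow_card_sub_one_eq_one c' hc'0⟩)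
    have hwz : w = z ^ i := Subtype.ext (by rw [coe_pow, hz, ← map_pow, hw])
    exact hwz ▸ Subgroup.npow_mem_zpowers z i
  · exact mem_center_iff.mpr
      ⟨c, (hc.pow_eq_one_iff_dvd _).mpr (Nat.gcd_dvd_left _ _), hz.symm⟩

section DiagonalOfUnit

variable {F : Type*} [Field F] {n : ℕ} {a : Fˣ} {d : SpecialLinearGroup (Fin n) F}

theorem coe_pow_eq_scalar_of_diag (hd : (d : Matrix (Fin n) (Fin n) F) = diagonal
      (fun i : Fin n => if (i : ℕ) < n - 1 then (a : F) else ((a⁻¹ : Fˣ) : F) ^ (n - 1)))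
    (hn : 1 ≤ n) {m : ℕ} (ha : a ^ (n * m) = 1) :
    ((d ^ m : SpecialLinearGroup (Fin n) F) : Matrix (Fin n) (Fin n) F) =
      scalar (Fin n) ((a : F) ^ m) := by
  refine coe_pow_eq_scalar_of_coe_eq_diagonal hd fun i => ?_
  split_ifs
  · rfl
  · simp only [← Units.val_pow_eq_pow_val, inv_pow_pred_pow_eq_pow hn ha]

theorem notMem_center_of_diag (hd : (d : Matrix (Fin n) (Fin n) F) = diagonal
      (fun i : Fin n => if (i : ℕ) < n - 1 then (a : F) else ((a⁻¹ : Fˣ) : F) ^ (n - 1)))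
    (hn : 2 ≤ n) (ha : a ^ n ≠ 1) : d ∉ Subgroup.center (SpecialLinearGroup (Fin n) F) := by
  refine notMem_center_of_coe_eq_diagonal hd (i := ⟨0, by omega⟩) (j := ⟨n - 1, by omega⟩) ?_
  rwa [if_pos (show 0 < n - 1 by omega), if_neg (lt_irrefl _), ← Units.val_pow_eq_pow_val,
    ne_eq, Units.val_inj, eq_inv_pow_pred_iff (by omega)]

end DiagonalOfUnit

end Matrix.SpecialLinearGroup

theorem stmt_13_general (n : ℕ) (hn : 2 ≤ n) (F : Type) [Field F] [Fintype F]
    (r : ℕ) (hr : r.Prime)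
    (a : Fˣ) (ha : orderOf a = r * Nat.gcd n (Fintype.card F - 1))
    (d : SpecialLinearGroup (Fin n) F)
    (hd : (d : Matrix (Fin n) (Fin n) F) =
      Matrix.diagonal (fun i : Fin n => if (i : ℕ) < n - 1 then (a : F) else ((a⁻¹ : Fˣ) : F) ^ (n - 1)))
    (Z₀ : Subgroup (SpecialLinearGroup (Fin n) F)) [Z₀.Normal]
    (hZ₀idx : Z₀.relIndex (Subgroup.center (SpecialLinearGroup (Fin n) F)) = r) :
    orderOf (QuotientGroup.mk d : SpecialLinearGroup (Fin n) F ⧸ Z₀) = r ^ 2 ∧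
      orderOf (QuotientGroup.mk d : ProjectiveSpecialLinearGroup (Fin n) F) = r ∧
      r ∣ orderOf (QuotientGroup.mk d : ProjectiveSpecialLinearGroup (Fin n) F) := by
  classical
  have : Fact r.Prime := ⟨hr⟩
  have : Nonempty (Fin n) := ⟨⟨0, by omega⟩⟩
  set k := Nat.gcd n (Fintype.card F - 1)
  have hk : 0 < k := Nat.gcd_pos_of_pos_left _ (by omega)
  -- `a ^ n = 1` would give `a ^ k = 1`, although `k < r * k = orderOf a`.
  have ha_n : a ^ n ≠ 1 := fun h => pow_ne_one_of_lt_orderOf hk.ne' (by nlinarith [hr.two_le])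
    (pow_gcd_eq_one.mpr ⟨h, Fintype.card_units (α := F) ▸ pow_card_eq_one⟩)
  have ha_nr : a ^ (n * r) = 1 := orderOf_dvd_iff_pow_eq_one.mp
    (ha ▸ mul_comm n r ▸ mul_dvd_mul_left r (Nat.gcd_dvd_left _ _))
  have hprim : IsPrimitiveRoot ((a : F) ^ r) k :=
    (IsPrimitiveRoot.coe_units_iff.mpr (ha ▸ IsPrimitiveRoot.orderOf a)).pow
      (mul_pos hr.pos hk) rfl
  have hcenter := SpecialLinearGroup.center_eq_zpowers_of_isPrimitiveRoot
    (SpecialLinearGroup.coe_pow_eq_scalar_of_diag hd (by omega) ha_nr) (by rwa [Fintype.card_fin])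
  have hpsl : orderOf (QuotientGroup.mk d : ProjectiveSpecialLinearGroup (Fin n) F) = r :=
    QuotientGroup.orderOf_mk_eq_prime (SpecialLinearGroup.notMem_center_of_diag hd hn ha_n)
      (hcenter ▸ Subgroup.mem_zpowers _)
  refine ⟨QuotientGroup.orderOf_mk_eq_prime_pow (m := 1) ?_ ?_, hpsl, hpsl.symm ▸ dvd_rfl⟩
  · rw [pow_one]
    exact Subgroup.notMem_of_le_zpowers_of_relIndex_ne_one hcenter.le (hZ₀idx ▸ hr.one_lt.ne')
  · have := Z₀.pow_relIndex_mem (hcenter ▸ Subgroup.mem_zpowers (d ^ r))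
    rwa [hZ₀idx, ← pow_mul, ← pow_two] at this

/-- Let `r` be a prime with `r ∣ gcd(n,q-1)` and
`r ∣ (q-1)/gcd(n,q-1)`, let `a ∈ F_q^×` have order `r·gcd(n,q-1)`, and let
`d = diag(a, …, a, a^{1-n}) ∈ SL_n(q)`. Let `Z₀` be a subgroup of the center of
`SL_n(q)` (the scalar matrices) of index `r` in the center. Then the image `s` of `d`
in `S = SL_n(q)/Z₀` has order `r²`, while the image `g` of `s` in
`PSL_n(q) = SL_n(q)/Z` has order `r` (in particular, `r` divides the order of the
image of `d` in `PSL_n(q)`). -/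
theorem stmt_13 (n : ℕ) (hn : 2 ≤ n) (F : Type) [Field F] [Fintype F]
    (r : ℕ) (hr : r.Prime)
    (h1 : r ∣ Nat.gcd n (Fintype.card F - 1))
    (h2 : r ∣ (Fintype.card F - 1) / Nat.gcd n (Fintype.card F - 1))
    (a : Fˣ) (ha : orderOf a = r * Nat.gcd n (Fintype.card F - 1))
    (d : SpecialLinearGroup (Fin n) F)
    (hd : (d : Matrix (Fin n) (Fin n) F) =
      Matrix.diagonal (fun i : Fin n => if (i : ℕ) < n - 1 then (a : F) else ((a⁻¹ : Fˣ) : F) ^ (n - 1)))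
    (Z₀ : Subgroup (SpecialLinearGroup (Fin n) F)) [Z₀.Normal]
    (hZ₀ : Z₀ ≤ Subgroup.center (SpecialLinearGroup (Fin n) F))
    (hZ₀idx : Z₀.relIndex (Subgroup.center (SpecialLinearGroup (Fin n) F)) = r) :
    orderOf (QuotientGroup.mk d : SpecialLinearGroup (Fin n) F ⧸ Z₀) = r ^ 2 ∧
      orderOf (QuotientGroup.mk d : ProjectiveSpecialLinearGroup (Fin n) F) = r ∧
      r ∣ orderOf (QuotientGroup.mk d : ProjectiveSpecialLinearGroup (Fin n) F) :=
  stmt_13_general n hn F r hr a ha d hd Z₀ hZ₀idx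
end

section
/- Let G be a finite simple group, V a G-module with unique trivial submodule I, and E = V ⋊ G. Then any subgroup of E isomorphic to a central extension Z_p.G (p prime) with nonsplit center must be a subextension of E with respect to the embedding I → V, i.e. S ∩ V = I and S·V = E. -/
open scoped Pointwise

/-!
Let `ρ : W → G` be the composite of `W ≃ S ↪ V ⋊ G` with the projection to `G`. Its kernel
`S ∩ V` is abelian, so its image under the extension map `W → G` is an abelian normal subgroup of
the nonabelian simple group `G`, hence trivial: `ker ρ` lies in the central kernel `ℤ_p`. Since
`|W| = p |G|`, counting forces `ker ρ = ℤ_p` and `ρ` onto `G`, which gives `S V = E`. An element of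
`S ∩ V` is then central in `S`, whose elements lift every `g ∈ G`, so it is fixed by `G` and lies
in `I`; both groups have order `p`.
-/

lemma Subgroup.eq_bot_of_isSimpleGroup_of_isMulCommutative {G : Type*} [Group G]
    [IsSimpleGroup G] (hG : ¬ IsMulCommutative G) (H : Subgroup G) [H.Normal]
    [IsMulCommutative H] : H = ⊥ := by
  refine (IsSimpleGroup.eq_bot_or_eq_top_of_normal H ‹_›).resolve_right fun hH => hG ?_
  subst hH
  exact ⟨⟨fun a b => setLike_mul_comm (s := (⊤ : Subgroup G)) trivial trivial⟩⟩

lemma Subgroup.le_ker_of_isSimpleGroup_of_isMulCommutative {W G : Type*} [Group W] [Group G]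
    [IsSimpleGroup G] (hG : ¬ IsMulCommutative G) {π : W →* G} (hπ : Function.Surjective π)
    (N : Subgroup W) [N.Normal] [IsMulCommutative N] : N ≤ π.ker := by
  have : (N.map π).Normal := Subgroup.Normal.map ‹_› π hπ
  rw [← Subgroup.map_eq_bot_iff]
  exact (N.map π).eq_bot_of_isSimpleGroup_of_isMulCommutative hG

lemma MonoidHom.map_center_le_centralizer_range {W E : Type*} [Group W] [Group E] (f : W →* E) :
    (Subgroup.center W).map f ≤ Subgroup.centralizer (f.range : Set E) := by
  rintro _ ⟨w, hw, rfl⟩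
  rw [Subgroup.mem_centralizer_iff]
  rintro _ ⟨w', rfl⟩
  have hcomm : Commute w' w := Subgroup.mem_center_iff.mp hw w'
  exact (hcomm.map f).eq

lemma AddSubgroup.natCard_toSubgroup {A : Type*} [AddGroup A] (H : AddSubgroup A) :
    Nat.card (AddSubgroup.toSubgroup H) = Nat.card H :=
  Nat.card_congr (Equiv.subtypeEquiv Multiplicative.toAdd fun _ => Iff.rfl)

lemma Submodule.natCard_eq_of_finrank_eq_one {K V : Type*} [DivisionRing K] [AddCommGroup V]
    [Module K V] (I : Submodule K V) (hI : Module.finrank K I = 1) : Nat.card I = Nat.card K := by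
  have : Module.Finite K I := Module.finite_of_finrank_eq_succ hI
  rw [Module.natCard_eq_pow_finrank (K := K), hI, pow_one]

lemma MonoidHom.card_range_mul_card_ker {W G : Type*} [Group W] [Group G] (f : W →* G) :
    Nat.card f.range * Nat.card f.ker = Nat.card W := by
  rw [← Subgroup.index_ker, mul_comm, Subgroup.card_mul_index]

lemma MonoidHom.surjective_and_ker_eq_of_ker_le {W G : Type*} [Group W] [Group G] [Finite G]
    {π ρ : W →* G} (hπ : Function.Surjective π) [Finite π.ker] (hle : ρ.ker ≤ π.ker) :
    Function.Surjective ρ ∧ ρ.ker = π.ker := by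
  have hcard := ρ.card_range_mul_card_ker
  rw [← π.card_range_mul_card_ker, π.range_eq_top.mpr hπ, Subgroup.card_top] at hcard
  have hrange : Nat.card ρ.range ≤ Nat.card G := Subgroup.card_le_card_group _
  have hker : Nat.card ρ.ker ≤ Nat.card π.ker := Subgroup.card_le_of_le hle
  have hGpos : 0 < Nat.card G := Nat.card_pos
  have hKpos : 0 < Nat.card π.ker := Nat.card_pos
  have hrange_eq : Nat.card ρ.range = Nat.card G := by
    by_contra h
    have := Nat.mul_lt_mul_of_lt_of_le (lt_of_le_of_ne hrange h) hker hKpos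
    omega
  refine ⟨ρ.range_eq_top.mp (Subgroup.eq_top_of_card_eq _ hrange_eq),
    Subgroup.eq_of_le_of_card_ge hle ?_⟩
  rw [hrange_eq] at hcard
  exact (Nat.eq_of_mul_eq_mul_left hGpos hcard).ge

namespace SemidirectProduct

variable {N G : Type*} [CommGroup N] [Group G] {φ : G →* MulAut N}

lemma conj_inl (s : N ⋊[φ] G) (n : N) : s * inl n * s⁻¹ = inl (φ s.right n) := by
  conv_lhs => rw [← inl_left_mul_inr_right s]
  calc inl s.left * inr s.right * inl n * (inl s.left * inr s.right)⁻¹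
      = inl s.left * (inr s.right * inl n * inr s.right⁻¹) * inl s.left⁻¹ := by
        simp only [mul_inv_rev, map_inv]; group
    _ = inl (φ s.right n) := by rw [← inl_aut, ← map_mul, ← map_mul, mul_inv_cancel_comm]

lemma commute_inl_iff {s : N ⋊[φ] G} {n : N} : Commute s (inl n) ↔ φ s.right n = n := by
  rw [Commute, SemiconjBy, ← mul_inv_eq_iff_eq_mul, conj_inl, inl_inj]

lemma apply_eq_of_inl_mem_centralizer {S : Subgroup (N ⋊[φ] G)} (hS : S.map rightHom = ⊤)
    {n : N} (hn : inl n ∈ Subgroup.centralizer (S : Set (N ⋊[φ] G))) (g : G) : φ g n = n := by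
  obtain ⟨s, hs, rfl⟩ := (Subgroup.mem_map).mp (hS ▸ Subgroup.mem_top g : g ∈ S.map rightHom)
  exact commute_inl_iff.mp (Subgroup.mem_centralizer_iff.mp hn s hs)

lemma mul_range_inl_eq_univ {S : Subgroup (N ⋊[φ] G)} (hS : S.map rightHom = ⊤) :
    (S : Set (N ⋊[φ] G)) * ((inl : N →* N ⋊[φ] G).range : Set (N ⋊[φ] G)) = Set.univ := by
  refine Set.eq_univ_of_forall fun e => ?_
  obtain ⟨s, hs, hse⟩ := (Subgroup.mem_map).mp (hS ▸ Subgroup.mem_top e.right : _ ∈ S.map rightHom)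
  refine ⟨s, hs, s⁻¹ * e, ?_, mul_inv_cancel_left s e⟩
  rw [SetLike.mem_coe, range_inl_eq_ker_rightHom, MonoidHom.mem_ker, map_mul, map_inv, hse,
    rightHom_eq_right, inv_mul_cancel]

lemma rightHom_comp_surjective_and_ker_eq {W : Type*} [Group W] [Finite G] [IsSimpleGroup G]
    (hG : ¬ IsMulCommutative G) {f : W →* N ⋊[φ] G} (hf : Function.Injective f) {π : W →* G}
    (hπ : Function.Surjective π) [Finite π.ker] :
    Function.Surjective (rightHom.comp f) ∧ (rightHom.comp f).ker = π.ker := by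
  have hker : (rightHom.comp f).ker = (inl : N →* N ⋊[φ] G).range.comap f := by
    rw [range_inl_eq_ker_rightHom, MonoidHom.comap_ker]
  have : IsMulCommutative (rightHom.comp f).ker :=
    hker ▸ Subgroup.comap_injective_isMulCommutative _ hf
  exact MonoidHom.surjective_and_ker_eq_of_ker_le hπ
    ((rightHom.comp f).ker.le_ker_of_isSimpleGroup_of_isMulCommutative hG hπ)

end SemidirectProduct

theorem stmt_16_general {G : Type*} [Group G] [Finite G] [IsSimpleGroup G]
    (hGnab : ¬ ∀ a b : G, a * b = b * a)
    (p : ℕ) [Fact p.Prime]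
    {V : Type*} [AddCommGroup V] [Module (ZMod p) V] [DistribMulAction G V]
    (I : Submodule (ZMod p) V)
    (hI : ∀ v : V, (∀ g : G, g • v = v) ↔ v ∈ I)
    (hIdim : Module.finrank (ZMod p) I = 1)
    {W : Type*} [Group W] (πW : W →* G) (hπW : Function.Surjective πW)
    (hker : πW.ker ≤ Subgroup.center W) (hkerp : Nat.card πW.ker = p)
    (S : Subgroup (SemidirectProduct (Multiplicative V) G (modAut G V)))
    (hiso : Nonempty (W ≃* S)) :
    S ⊓ (SemidirectProduct.inl :
        Multiplicative V →* SemidirectProduct (Multiplicative V) G (modAut G V)).range =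
      Subgroup.map SemidirectProduct.inl (AddSubgroup.toSubgroup I.toAddSubgroup) ∧
    (S : Set (SemidirectProduct (Multiplicative V) G (modAut G V))) *
      ((SemidirectProduct.inl :
        Multiplicative V →* SemidirectProduct (Multiplicative V) G (modAut G V)).range :
        Set (SemidirectProduct (Multiplicative V) G (modAut G V))) = Set.univ := by
  open SemidirectProduct in
  obtain ⟨φ⟩ := hiso
  let f := S.subtype.comp φ.toMonoidHom
  have hf : Function.Injective f := S.subtype_injective.comp φ.injective
  have hfS : f.range = S := by
    rw [MonoidHom.range_comp, MonoidHom.range_eq_top.mpr φ.surjective, ← MonoidHom.range_eq_map,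
      Subgroup.range_subtype]
  have hp : p ≠ 0 := (Fact.out : p.Prime).ne_zero
  have : Finite πW.ker := Nat.finite_of_card_ne_zero (hkerp ▸ hp)
  obtain ⟨hρ_surj, hρ_ker⟩ := rightHom_comp_surjective_and_ker_eq
    (fun h => hGnab h.is_comm.comm) hf hπW
  have hSG : S.map rightHom = ⊤ := by
    rw [← hfS, ← MonoidHom.range_comp, MonoidHom.range_eq_top.mpr hρ_surj]
  have hSV : S ⊓ (inl : Multiplicative V →* _).range = πW.ker.map f := by
    rw [← hρ_ker, ← MonoidHom.comap_ker, ← range_inl_eq_ker_rightHom, Subgroup.map_comap_eq, hfS]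
  have hcard_I : Nat.card ((AddSubgroup.toSubgroup I.toAddSubgroup).map
      (inl : Multiplicative V →* Multiplicative V ⋊[modAut G V] G)) = p := by
    rw [Subgroup.card_map_of_injective inl_injective, AddSubgroup.natCard_toSubgroup]
    exact (I.natCard_eq_of_finrank_eq_one hIdim).trans (Nat.card_zmod p)
  have := Nat.finite_of_card_ne_zero (hcard_I ▸ hp)
  refine ⟨Subgroup.eq_of_le_of_card_ge ?_ ?_, mul_range_inl_eq_univ hSG⟩
  · rintro _ hv
    obtain ⟨v, rfl⟩ := hv.2
    have hcentral : inl v ∈ Subgroup.centralizer (S : Set (Multiplicative V ⋊[modAut G V] G)) :=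
      hfS ▸ f.map_center_le_centralizer_range (Subgroup.map_mono hker (hSV ▸ hv))
    exact ⟨v, (hI _).mp fun g => congrArg Multiplicative.toAdd
      (apply_eq_of_inl_mem_centralizer hSG hcentral g), rfl⟩
  · rw [hcard_I, hSV, Subgroup.card_map_of_injective hf, hkerp]

/-- Let `G` be a finite (nonabelian) simple group, `V` an
`𝔽_p[G]`-module whose unique trivial submodule is `I ≅ 𝔽_p`, and `E = V ⋊ G`. Then
any subgroup `S ≤ E` isomorphic to a nonsplit central extension `ℤ_p.G` must be a
subextension of `E` with respect to `I → V`, i.e. `S ∩ V = I` and `S·V = E`. -/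
theorem stmt_16 {G : Type*} [Group G] [Finite G] [IsSimpleGroup G]
    (hGnab : ¬ ∀ a b : G, a * b = b * a)
    (p : ℕ) [Fact p.Prime]
    {V : Type*} [AddCommGroup V] [Module (ZMod p) V] [DistribMulAction G V]
    [SMulCommClass G (ZMod p) V] [FiniteDimensional (ZMod p) V]
    (I : Submodule (ZMod p) V)
    (hI : ∀ v : V, (∀ g : G, g • v = v) ↔ v ∈ I)
    (hIdim : Module.finrank (ZMod p) I = 1)
    {W : Type*} [Group W] (πW : W →* G) (hπW : Function.Surjective πW)
    (hker : πW.ker ≤ Subgroup.center W) (hkerp : Nat.card πW.ker = p)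
    (hnonsplit : ¬ ∃ σ : G →* W, πW.comp σ = MonoidHom.id G)
    (S : Subgroup (SemidirectProduct (Multiplicative V) G (modAut G V)))
    (hiso : Nonempty (W ≃* S)) :
    S ⊓ (SemidirectProduct.inl :
        Multiplicative V →* SemidirectProduct (Multiplicative V) G (modAut G V)).range =
      Subgroup.map SemidirectProduct.inl (AddSubgroup.toSubgroup I.toAddSubgroup) ∧
    (S : Set (SemidirectProduct (Multiplicative V) G (modAut G V))) *
      ((SemidirectProduct.inl :
        Multiplicative V →* SemidirectProduct (Multiplicative V) G (modAut G V)).range :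
        Set (SemidirectProduct (Multiplicative V) G (modAut G V))) = Set.univ :=
  stmt_16_general hGnab p I hI hIdim πW hπW hker hkerp S hiso
end
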